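/- Both t₁ and t₂ are maximal tori of h₁: each is an abelian Lie subalgebra of Der(h₁) all of whose elements are semisimple linear endomorphisms of h₁, and neither is properly contained in another such subalgebra. -/

import Mathlib

/-!
The four maps are derivations of `h₁`; `d₁`, `d₂` are diagonal in the basis and `e₁` is scalar
on `span (X₁, X₂)`, where `e₂` rotates, so each pair commutes. Each map is annihilated by a
squarefree polynomial (`X (X - 1)`, `(X - 1) (X - 2)` or `X (X² + 1)`), hence is semisimple.

Maximality is a centraliser computation. A derivation `f` commuting with `d₁, d₂` preserves
their joint eigenlines `ℝX₁`, `ℝX₂`, say `f X₁ = a X₁`, `f X₂ = q X₂`, and the Leibniz rule at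
`[X₁, X₂] = X₃` gives `f X₃ = (a + q) X₃`, so `f = a d₁ + q d₂`. For `t₂`, commuting with `e₁`
keeps `f X₁ = a X₁ + c X₂` in the `1`-eigenspace of `e₁`, commuting with `e₂` forces
`f X₂ = a X₂ - c X₁`, and the Leibniz rule gives `f X₃ = 2a X₃`, so `f = a e₁ + c e₂`.
-/

open Module

/-- An endomorphism is semisimple when every invariant subspace admits an invariant
complement. -/
def IsSemisimpleEnd {g : Type*} [AddCommGroup g] [Module ℝ g] (f : Module.End ℝ g) : Prop :=
  ∀ p : Submodule ℝ g, (∀ x ∈ p, f x ∈ p) →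
    ∃ q : Submodule ℝ g, (∀ x ∈ q, f x ∈ q) ∧ IsCompl p q

/-- A torus of a real Lie algebra: an abelian Lie subalgebra of `Der g` (here presented as a
subspace of endomorphisms consisting of pairwise commuting derivations) all of whose elements
are semisimple. -/
def IsTorus {g : Type*} [LieRing g] [LieAlgebra ℝ g]
    (t : Submodule ℝ (Module.End ℝ g)) : Prop :=
  (∀ f ∈ t, ∀ x y : g, f ⁅x, y⁆ = ⁅f x, y⁆ + ⁅x, f y⁆) ∧
  (∀ f ∈ t, ∀ f' ∈ t, f * f' = f' * f) ∧
  (∀ f ∈ t, IsSemisimpleEnd f)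

/-- A maximal torus is a torus not properly contained in any other torus. -/
def IsMaximalTorus {g : Type*} [LieRing g] [LieAlgebra ℝ g]
    (t : Submodule ℝ (Module.End ℝ g)) : Prop :=
  IsTorus t ∧ ∀ t' : Submodule ℝ (Module.End ℝ g), IsTorus t' → t ≤ t' → t' = t

def IsLieDerivation {R L : Type*} [CommRing R] [LieRing L] [LieAlgebra R L]
    (D : Module.End R L) : Prop :=
  ∀ x y : L, D ⁅x, y⁆ = ⁅D x, y⁆ + ⁅x, D y⁆

section LieDerivation

variable {R L : Type*} [CommRing R] [LieRing L] [LieAlgebra R L]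

theorem IsLieDerivation.of_basis {ι : Type*} (b : Basis ι R L) {D : Module.End R L}
    (h : ∀ i j, D ⁅b i, b j⁆ = ⁅D (b i), b j⁆ + ⁅b i, D (b j)⁆) : IsLieDerivation D := by
  let bracket : L →ₗ[R] L →ₗ[R] L := (LieModule.toEnd R L L : L →ₗ[R] Module.End R L)
  have key : bracket.compr₂ D = bracket ∘ₗ D + bracket.compl₂ D :=
    LinearMap.ext_basis b b h
  exact fun x y => LinearMap.congr_fun₂ key x y

theorem leibniz_self (D : Module.End R L) (x : L) : D ⁅x, x⁆ = ⁅D x, x⁆ + ⁅x, D x⁆ := by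
  rw [lie_self, map_zero, ← lie_skew, neg_add_cancel]

theorem leibniz_swap {D : Module.End R L} {x y : L} (h : D ⁅x, y⁆ = ⁅D x, y⁆ + ⁅x, D y⁆) :
    D ⁅y, x⁆ = ⁅D y, x⁆ + ⁅y, D x⁆ := by
  rw [← lie_skew y x, map_neg, h, ← lie_skew (D y) x, ← lie_skew y (D x)]
  abel

end LieDerivation

theorem one_ne_two_of_nontrivial {R : Type*} [Ring R] [Nontrivial R] : (1 : R) ≠ 2 := by
  rw [← one_add_one_eq_two, ne_eq, left_eq_add]
  exact one_ne_zero

section Endomorphism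

open Polynomial

variable {K V : Type*} [Field K] [AddCommGroup V] [Module K V]

theorem Module.End.isSemisimple_of_mul_sub_eq_zero {f : Module.End K V} {a c : K} (hac : a ≠ c)
    (h : (f - algebraMap K _ a) * (f - algebraMap K _ c) = 0) : f.IsSemisimple := by
  refine isSemisimple_of_squarefree_aeval_eq_zero
    ((separable_X_sub_C.mul separable_X_sub_C
      (isCoprime_X_sub_C_of_isUnit_sub (sub_ne_zero.mpr hac).isUnit)).squarefree) ?_
  simpa using h

theorem Module.End.isSemisimple_of_mul_sq_add_one_eq_zero (h2 : (2 : K) ≠ 0)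
    {f : Module.End K V} (h : f * (f ^ 2 + 1) = 0) : f.IsSemisimple := by
  have hsep : ((X : K[X]) ^ 2 + 1).Separable := by
    refine ⟨1, -C (2⁻¹ : K) * X, ?_⟩
    rw [derivative_add, derivative_X_pow, derivative_one]
    have : C (2⁻¹ : K) * C 2 = 1 := by rw [← C_mul, inv_mul_cancel₀ h2, C_1]
    linear_combination (-X ^ 2 : K[X]) * this
  refine isSemisimple_of_squarefree_aeval_eq_zero
    ((separable_X.mul hsep ⟨-X, 1, by ring⟩).squarefree) ?_
  simpa using h

theorem Module.Basis.repr_apply_eq_zero_of_commute {ι : Type*} (b : Basis ι K V)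
    {D f : Module.End K V} {μ : ι → K} (hD : ∀ i, D (b i) = μ i • b i) (hfD : Commute f D)
    {i j : ι} (hij : μ i ≠ μ j) : b.repr (f (b i)) j = 0 := by
  have hcoord : b.coord j ∘ₗ D = μ j • b.coord j := b.ext fun k => by
    rcases eq_or_ne k j with rfl | hkj <;> simp [*]
  have key : μ j * b.repr (f (b i)) j = μ i * b.repr (f (b i)) j := by
    have := LinearMap.congr_fun hcoord (f (b i))
    rw [LinearMap.comp_apply, ← Module.End.mul_apply, ← hfD.eq, Module.End.mul_apply, hD,
      map_smul, map_smul] at this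
    simpa [eq_comm] using this
  exact (mul_eq_zero.mp (by linear_combination key : (μ j - μ i) * _ = 0)).resolve_left
    (sub_ne_zero.mpr hij.symm)

theorem Module.Basis.sum_repr_fin_three (b : Basis (Fin 3) K V) (x : V) :
    b.repr x 0 • b 0 + b.repr x 1 • b 1 + b.repr x 2 • b 2 = x := by
  rw [← Fin.sum_univ_three (fun i => b.repr x i • b i), b.sum_repr]

end Endomorphism

section Torus

variable {g : Type*} [LieRing g] [LieAlgebra ℝ g]

theorem isSemisimpleEnd_of_isSemisimple {f : Module.End ℝ g} (h : f.IsSemisimple) :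
    IsSemisimpleEnd f := fun p hp => by
  obtain ⟨q, hq, hpq⟩ := Module.End.isSemisimple_iff.mp h p fun x hx => hp x hx
  exact ⟨q, fun x hx => hq hx, hpq⟩

theorem isTorus_span_pair [FiniteDimensional ℝ g] {A B : Module.End ℝ g}
    (hA : IsLieDerivation A) (hB : IsLieDerivation B) (hAB : Commute A B)
    (hsA : A.IsSemisimple) (hsB : B.IsSemisimple) :
    IsTorus (Submodule.span ℝ {A, B}) := by
  refine ⟨?_, ?_, ?_⟩
  · intro f hf x y
    obtain ⟨a, c, rfl⟩ := Submodule.mem_span_pair.mp hf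
    simp only [LinearMap.add_apply, LinearMap.smul_apply, hA x y, hB x y,
      smul_add, add_lie, lie_add, smul_lie, lie_smul]
    abel
  · intro f hf f' hf'
    obtain ⟨a, c, rfl⟩ := Submodule.mem_span_pair.mp hf
    obtain ⟨a', c', rfl⟩ := Submodule.mem_span_pair.mp hf'
    simp only [add_mul, mul_add, smul_mul_assoc, mul_smul_comm, smul_add, smul_smul,
      hAB.eq, mul_comm]
    abel
  · intro f hf
    obtain ⟨a, c, rfl⟩ := Submodule.mem_span_pair.mp hf
    exact isSemisimpleEnd_of_isSemisimple <|
      (Module.End.IsSemisimple_smul a hsA).add_of_commute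
        ((hAB.smul_left a).smul_right c) (Module.End.IsSemisimple_smul c hsB)

theorem isMaximalTorus_span_pair [FiniteDimensional ℝ g] {A B : Module.End ℝ g}
    (hA : IsLieDerivation A) (hB : IsLieDerivation B) (hAB : Commute A B)
    (hsA : A.IsSemisimple) (hsB : B.IsSemisimple)
    (hcent : ∀ f, IsLieDerivation f → Commute f A → Commute f B → f ∈ Submodule.span ℝ {A, B}) :
    IsMaximalTorus (Submodule.span ℝ {A, B}) := by
  refine ⟨isTorus_span_pair hA hB hAB hsA hsB, fun t ht hle => le_antisymm ?_ hle⟩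
  intro f hf
  exact hcent f (ht.1 f hf) (ht.2.1 f hf A (hle (Submodule.subset_span (by simp))))
    (ht.2.1 f hf B (hle (Submodule.subset_span (by simp))))

end Torus

section Heisenberg

variable {K L : Type*} [Field K] [LieRing L] [LieAlgebra K L] {b : Basis (Fin 3) K L}

local notation "d₁" => Basis.constr b K ![b 0, 0, b 2]
local notation "d₂" => Basis.constr b K ![0, b 1, b 2]
local notation "e₁" => Basis.constr b K ![b 0, b 1, (2 : K) • b 2]
local notation "e₂" => Basis.constr b K ![b 1, -b 0, 0]

theorem IsLieDerivation.of_basis_fin_three (b : Basis (Fin 3) K L) {D : Module.End K L}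
    (h01 : D ⁅b 0, b 1⁆ = ⁅D (b 0), b 1⁆ + ⁅b 0, D (b 1)⁆)
    (h02 : D ⁅b 0, b 2⁆ = ⁅D (b 0), b 2⁆ + ⁅b 0, D (b 2)⁆)
    (h12 : D ⁅b 1, b 2⁆ = ⁅D (b 1), b 2⁆ + ⁅b 1, D (b 2)⁆) : IsLieDerivation D :=
  .of_basis b fun i j => by
    fin_cases i <;> fin_cases j <;>
      first | exact leibniz_self D _ | assumption | exact leibniz_swap ‹_›

theorem isLieDerivation_d₁ (h12 : ⁅b 0, b 1⁆ = b 2) (h13 : ⁅b 0, b 2⁆ = 0)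
    (h23 : ⁅b 1, b 2⁆ = 0) : IsLieDerivation d₁ :=
  .of_basis_fin_three b (by simp [h12]) (by simp [h13]) (by simp [h23])

theorem isLieDerivation_d₂ (h12 : ⁅b 0, b 1⁆ = b 2) (h13 : ⁅b 0, b 2⁆ = 0)
    (h23 : ⁅b 1, b 2⁆ = 0) : IsLieDerivation d₂ :=
  .of_basis_fin_three b (by simp [h12]) (by simp [h13]) (by simp [h23])

theorem isLieDerivation_e₁ (h12 : ⁅b 0, b 1⁆ = b 2) (h13 : ⁅b 0, b 2⁆ = 0)
    (h23 : ⁅b 1, b 2⁆ = 0) : IsLieDerivation e₁ :=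
  .of_basis_fin_three b (by simp [h12, two_smul]) (by simp [h13]) (by simp [h23])

theorem isLieDerivation_e₂ (h12 : ⁅b 0, b 1⁆ = b 2) (h13 : ⁅b 0, b 2⁆ = 0)
    (h23 : ⁅b 1, b 2⁆ = 0) : IsLieDerivation e₂ :=
  .of_basis_fin_three b (by simp [h12]) (by simp [h13, h23]) (by simp [h13, h23])

theorem commute_d₁_d₂ : Commute d₁ d₂ := b.ext fun i => by fin_cases i <;> simp

theorem commute_e₁_e₂ : Commute e₁ e₂ := b.ext fun i => by
  fin_cases i <;> simp [Module.End.mul_apply, -Basis.constr_apply_fintype]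

theorem isSemisimple_d₁ : Module.End.IsSemisimple d₁ :=
  Module.End.isSemisimple_of_mul_sub_eq_zero zero_ne_one (b.ext fun i => by
    fin_cases i <;> simp [-Basis.constr_apply_fintype])

theorem isSemisimple_d₂ : Module.End.IsSemisimple d₂ :=
  Module.End.isSemisimple_of_mul_sub_eq_zero zero_ne_one (b.ext fun i => by
    fin_cases i <;> simp [-Basis.constr_apply_fintype])

theorem isSemisimple_e₁ : Module.End.IsSemisimple e₁ :=
  Module.End.isSemisimple_of_mul_sub_eq_zero one_ne_two_of_nontrivial (b.ext fun i => by
    fin_cases i <;> simp [-Basis.constr_apply_fintype])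

theorem isSemisimple_e₂ (h2 : (2 : K) ≠ 0) : Module.End.IsSemisimple e₂ :=
  Module.End.isSemisimple_of_mul_sq_add_one_eq_zero h2 (b.ext fun i => by
    fin_cases i <;> simp [sq, -Basis.constr_apply_fintype])

theorem mem_span_d₁_d₂_of_commute (h12 : ⁅b 0, b 1⁆ = b 2) {f : Module.End K L}
    (hf : IsLieDerivation f) (hf₁ : Commute f d₁) (hf₂ : Commute f d₂) :
    f ∈ Submodule.span K {d₁, d₂} := by
  have hd₁ : ∀ i, d₁ (b i) = (![1, 0, 1] : Fin 3 → K) i • b i := by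
    intro i; fin_cases i <;> simp
  have hd₂ : ∀ i, d₂ (b i) = (![0, 1, 1] : Fin 3 → K) i • b i := by
    intro i; fin_cases i <;> simp
  set a := b.repr (f (b 0)) 0
  set q := b.repr (f (b 1)) 1
  have hf0 : f (b 0) = a • b 0 := by
    conv_lhs => rw [← b.sum_repr_fin_three (f (b 0))]
    rw [b.repr_apply_eq_zero_of_commute hd₁ hf₁ (i := 0) (j := 1) (by simp),
      b.repr_apply_eq_zero_of_commute hd₂ hf₂ (i := 0) (j := 2) (by simp)]
    simp [a]
  have hf1 : f (b 1) = q • b 1 := by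
    conv_lhs => rw [← b.sum_repr_fin_three (f (b 1))]
    rw [b.repr_apply_eq_zero_of_commute hd₁ hf₁ (i := 1) (j := 0) (by simp),
      b.repr_apply_eq_zero_of_commute hd₁ hf₁ (i := 1) (j := 2) (by simp)]
    simp [q]
  have hf2 : f (b 2) = (a + q) • b 2 := by
    rw [← h12, hf, hf0, hf1, smul_lie, lie_smul, h12, add_smul]
  refine Submodule.mem_span_pair.mpr ⟨a, q, b.ext fun i => ?_⟩
  fin_cases i <;> simp [hf0, hf1, hf2, add_smul, -Basis.constr_apply_fintype]

theorem mem_span_e₁_e₂_of_commute (h12 : ⁅b 0, b 1⁆ = b 2) {f : Module.End K L}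
    (hf : IsLieDerivation f) (hf₁ : Commute f e₁) (hf₂ : Commute f e₂) :
    f ∈ Submodule.span K {e₁, e₂} := by
  have he₁ : ∀ i, e₁ (b i) = (![1, 1, 2] : Fin 3 → K) i • b i := by
    intro i; fin_cases i <;> simp [two_smul]
  set a := b.repr (f (b 0)) 0
  set c := b.repr (f (b 0)) 1
  have hf0 : f (b 0) = a • b 0 + c • b 1 := by
    conv_lhs => rw [← b.sum_repr_fin_three (f (b 0))]
    rw [b.repr_apply_eq_zero_of_commute he₁ hf₁ (i := 0) (j := 2)
      (by simpa using one_ne_two_of_nontrivial), zero_smul, add_zero]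
  have hf1 : f (b 1) = a • b 1 - c • b 0 := by
    have : f (e₂ (b 0)) = e₂ (f (b 0)) := LinearMap.congr_fun hf₂.eq (b 0)
    simpa [hf0, -Basis.constr_apply_fintype, sub_eq_add_neg, add_comm] using this
  have hf2 : f (b 2) = (2 * a) • b 2 := by
    rw [← h12, hf, hf0, hf1]
    simp [h12, two_mul, add_smul]
  refine Submodule.mem_span_pair.mpr ⟨a, c, b.ext fun i => ?_⟩
  fin_cases i <;>
    simp [hf0, hf1, hf2, smul_smul, mul_comm, sub_eq_add_neg, -Basis.constr_apply_fintype]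

end Heisenberg

theorem t1_t2_maximal_tori {g : Type} [LieRing g] [LieAlgebra ℝ g] (b : Basis (Fin 3) ℝ g)
    (h12 : ⁅b 0, b 1⁆ = b 2) (h13 : ⁅b 0, b 2⁆ = 0) (h23 : ⁅b 1, b 2⁆ = 0) :
    IsMaximalTorus (Submodule.span ℝ
        {b.constr ℝ ![b 0, 0, b 2], b.constr ℝ ![0, b 1, b 2]}) ∧
    IsMaximalTorus (Submodule.span ℝ
        {b.constr ℝ ![b 0, b 1, (2 : ℝ) • b 2], b.constr ℝ ![b 1, -b 0, 0]}) := by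
  have : FiniteDimensional ℝ g := .of_basis b
  exact ⟨isMaximalTorus_span_pair (isLieDerivation_d₁ h12 h13 h23)
      (isLieDerivation_d₂ h12 h13 h23) commute_d₁_d₂ isSemisimple_d₁ isSemisimple_d₂
      fun _ hf => mem_span_d₁_d₂_of_commute h12 hf,
    isMaximalTorus_span_pair (isLieDerivation_e₁ h12 h13 h23)
      (isLieDerivation_e₂ h12 h13 h23) commute_e₁_e₂ isSemisimple_e₁
      (isSemisimple_e₂ two_ne_zero) fun _ hf => mem_span_e₁_e₂_of_commute h12 hf⟩
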